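/- arXiv:1605.08147 — 8 statements merged into one kernel-verified Lean document; each statement's English description precedes it below -/
import Mathlib

section
/- Let g be an order-reversing self-map of a partially ordered set Y. Then the union of the odd cycles of g forms an antichain; that is, if x and y each lie on a cycle of g of odd length and x ≤ y, then x = y. -/
private lemma odd_iter_rev {Y : Type*} [PartialOrder Y] (g : Y → Y)
    (hg : ∀ a b : Y, a ≤ b → g b ≤ g a) :
    ∀ j : ℕ, ∀ a b : Y, a ≤ b → g^[2*j+1] b ≤ g^[2*j+1] a := by
  intro j
  induction j with
  | zero => intro a b h; simpa using hg a b h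
  | succ n ih =>
    intro a b h
    have h1 := hg _ _ (ih a b h)
    have h2 := hg _ _ h1
    have e : 2*(n+1)+1 = (2*n+1) + 1 + 1 := by ring
    rw [e]; simp only [Function.iterate_succ_apply']
    simpa [Function.iterate_succ_apply'] using h2

/-- Lemma (odd cycles of an order-reversing map form an antichain):
if `g` is order-reversing on a poset `Y`, and `x`, `y` each lie on a cycle of
`g` of odd length (i.e. their minimal period under `g` is odd), then `x ≤ y`
implies `x = y`. -/
theorem odd_cycles_antichain {Y : Type*} [PartialOrder Y] (g : Y → Y)
    (hg : ∀ a b : Y, a ≤ b → g b ≤ g a) (x y : Y)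
    (hx : 0 < Function.minimalPeriod g x ∧ Odd (Function.minimalPeriod g x))
    (hy : 0 < Function.minimalPeriod g y ∧ Odd (Function.minimalPeriod g y))
    (hxy : x ≤ y) : x = y := by
  set m := Function.minimalPeriod g x
  set n := Function.minimalPeriod g y
  obtain ⟨j, hj⟩ : Odd (m * n) := hx.2.mul hy.2
  have hxp : g^[m*n] x = x := by
    have := (Function.isPeriodicPt_minimalPeriod g x).mul_const n
    exact this
  have hyp : g^[m*n] y = y := by
    have := (Function.isPeriodicPt_minimalPeriod g y).const_mul m
    exact this
  have hk := odd_iter_rev g hg j x y hxy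
  rw [← hj, hxp, hyp] at hk
  exact le_antisymm hxy hk
end

section
/- If an algebra A has a ternary term operation equal to the ternary discriminator on A and |A| ≥ 2, then A is simple: every congruence on A is either the equality relation or the full relation. -/
/-- If an algebra with at least two elements has a ternary operation that is
compatible with every congruence and equals the ternary discriminator, then
it is simple: every congruence is equality or the full relation. -/
theorem discriminator_implies_simple {A : Type*} [DecidableEq A]
    (t : A → A → A → A)
    (ht : ∀ x y z : A, t x y z = if x = y then z else x)
    (h2 : ∃ a b : A, a ≠ b)
    (r : Setoid A)
    (hcompat : ∀ a₁ b₁ a₂ b₂ a₃ b₃ : A,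
      r.r a₁ b₁ → r.r a₂ b₂ → r.r a₃ b₃ → r.r (t a₁ a₂ a₃) (t b₁ b₂ b₃)) :
    (∀ a b : A, r.r a b → a = b) ∨ (∀ a b : A, r.r a b) := by
  by_cases h : ∀ a b : A, r.r a b → a = b
  · exact Or.inl h
  · right
    push_neg at h
    obtain ⟨a, b, hab, hne⟩ := h
    have key : ∀ c : A, r.r a c := by
      intro c
      have := hcompat a b b b c c hab (r.refl b) (r.refl c)
      rw [ht, ht, if_neg hne, if_pos rfl] at this
      exact this
    intro x y
    exact r.trans (r.symm (key x)) (key y)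
end

section
/- Let X₁, X₂, Y be Priestley spaces and φ₁ : X₁ → Y, φ₂ : X₂ → Y be jointly surjective continuous order-preserving maps. If φ₁ is not surjective, then B(φ₁,φ₂) := { (α ∘ φ₁, α ∘ φ₂) : α continuous order-preserving Y → 2 } is not the graph of a partial function: there exist α, β continuous order-preserving Y → 2 with α ∘ φ₁ = β ∘ φ₁ but α ∘ φ₂ ≠ β ∘ φ₂. -/
/-- If `φ₁`, `φ₂` are jointly surjective continuous order-preserving maps of
Priestley spaces and `φ₁` is not surjective, then `B(φ₁,φ₂)` is not the graph
of a partial function. -/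
theorem B_not_graph_of_partial_map
    {X₁ X₂ Y : Type*}
    [TopologicalSpace X₁] [PartialOrder X₁] [CompactSpace X₁] [PriestleySpace X₁]
    [TopologicalSpace X₂] [PartialOrder X₂] [CompactSpace X₂] [PriestleySpace X₂]
    [TopologicalSpace Y] [PartialOrder Y] [CompactSpace Y] [PriestleySpace Y]
    (φ₁ : X₁ → Y) (φ₂ : X₂ → Y)
    (hc₁ : Continuous φ₁) (hm₁ : Monotone φ₁)
    (hc₂ : Continuous φ₂) (hm₂ : Monotone φ₂)
    (hjoint : ∀ y : Y, (∃ x, φ₁ x = y) ∨ (∃ x, φ₂ x = y))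
    (hns : ¬ Function.Surjective φ₁) :
    ∃ α β : Y → Bool, Continuous α ∧ Monotone α ∧ Continuous β ∧ Monotone β ∧
      α ∘ φ₁ = β ∘ φ₁ ∧ α ∘ φ₂ ≠ β ∘ φ₂ := by
  classical
  simp only [Function.Surjective, not_forall] at hns
  obtain ⟨y₀, hy₀⟩ := hns
  set K : Set Y := Set.range φ₁ with hK
  have hKc : IsCompact K := isCompact_range hc₁
  -- for each point, a clopen set as in the covering argument
  have key : ∀ y : Y, ∃ C : Set Y, IsClopen C ∧ (y ≠ y₀ → y ∈ C) ∧ y₀ ∉ C ∧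
      (IsUpperSet C ∨ IsUpperSet Cᶜ) := by
    intro y
    by_cases hyy : y = y₀
    · exact ⟨∅, isClopen_empty, fun h => absurd hyy h, Set.notMem_empty _,
        Or.inl (isUpperSet_empty)⟩
    · by_cases h : y₀ ≤ y
      · have hne : ¬ y ≤ y₀ := fun h' => hyy (le_antisymm h' h)
        obtain ⟨U, hU, hUup, hyU, hy₀U⟩ := exists_isClopen_upper_of_not_le hne
        exact ⟨U, hU, fun _ => hyU, hy₀U, Or.inl hUup⟩
      · obtain ⟨W, hW, hWup, hy₀W, hyW⟩ := exists_isClopen_upper_of_not_le h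
        refine ⟨Wᶜ, hW.compl, fun _ => hyW, by simpa using hy₀W, Or.inr ?_⟩
        simpa using hWup
  choose C hCclopen hCmem hCy₀ hCcase using key
  -- finite subcover of K
  have hcover : K ⊆ ⋃ y ∈ K, C y := by
    intro y hy
    have hyne : y ≠ y₀ := by
      rintro rfl
      obtain ⟨x, hx⟩ := hy
      exact hy₀ ⟨x, hx⟩
    exact Set.mem_biUnion hy (hCmem y hyne)
  obtain ⟨T, hTK, hTfin, hTcover⟩ :=
    hKc.elim_finite_subcover_image (fun y _ => (hCclopen y).2) hcover
  -- the two clopen upsets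
  set T₁ : Set Y := {z ∈ T | IsUpperSet (C z)} with hT₁
  set T₂ : Set Y := {z ∈ T | ¬ IsUpperSet (C z)} with hT₂
  set U : Set Y := ⋃ z ∈ T₁, C z with hUdef
  set W : Set Y := ⋂ z ∈ T₂, (C z)ᶜ with hWdef
  have hUclopen : IsClopen U :=
    (hTfin.subset (Set.sep_subset _ _)).isClopen_biUnion fun z _ => hCclopen z
  have hWclopen : IsClopen W :=
    (hTfin.subset (Set.sep_subset _ _)).isClopen_biInter fun z _ => (hCclopen z).compl
  have hUup : IsUpperSet U := isUpperSet_iUnion₂ fun z hz => hz.2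
  have hWup : IsUpperSet W := isUpperSet_iInter₂ fun z hz => by
    rcases hCcase z with h | h
    · exact absurd h hz.2
    · exact h
  have hy₀U : y₀ ∉ U := by
    simp only [hUdef, Set.mem_iUnion]
    rintro ⟨z, hz, hmem⟩
    exact hCy₀ z hmem
  have hy₀W : y₀ ∈ W := by
    simp only [hWdef, Set.mem_iInter]
    intro z _
    exact hCy₀ z
  -- on K, W is contained in U
  have hWK : ∀ y ∈ K, y ∈ W → y ∈ U := by
    intro y hy hyW
    obtain ⟨z, hzT, hyz⟩ := Set.mem_iUnion₂.1 (hTcover hy)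
    by_cases hup : IsUpperSet (C z)
    · exact Set.mem_biUnion ⟨hzT, hup⟩ hyz
    · exact absurd hyz (by
        have := Set.mem_iInter₂.1 hyW z ⟨hzT, hup⟩
        simpa using this)
  set V : Set Y := U ∪ W with hVdef
  have hVclopen : IsClopen V := hUclopen.union hWclopen
  have hVup : IsUpperSet V := hUup.union hWup
  have hVK : ∀ y ∈ K, (y ∈ V ↔ y ∈ U) := by
    intro y hy
    constructor
    · rintro (h | h)
      · exact h
      · exact hWK y hy h
    · exact fun h => Or.inl h
  refine ⟨V.boolIndicator, U.boolIndicator,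
    (continuous_boolIndicator_iff_isClopen _).2 hVclopen,
    ?_, (continuous_boolIndicator_iff_isClopen _).2 hUclopen, ?_, ?_, ?_⟩
  · intro a b hab
    by_cases ha : a ∈ V
    · simp [Set.boolIndicator, ha, hVup hab ha]
    · simp [Set.boolIndicator, ha]
  · intro a b hab
    by_cases ha : a ∈ U
    · simp [Set.boolIndicator, ha, hUup hab ha]
    · simp [Set.boolIndicator, ha]
  · funext x
    have hx : φ₁ x ∈ K := ⟨x, rfl⟩
    simp only [Function.comp_apply, Set.boolIndicator]
    by_cases h : φ₁ x ∈ U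
    · simp [h, (hVK _ hx).2 h]
    · have hv : φ₁ x ∉ V := fun h' => h ((hVK _ hx).1 h')
      simp [h, hv]
  · intro hcontra
    obtain ⟨x, hx⟩ := (hjoint y₀).resolve_left (by
      exact fun h => hy₀ h)
    have := congrFun hcontra x
    simp only [Function.comp_apply, hx, Set.boolIndicator] at this
    simp [Or.inr hy₀W, hy₀U, show y₀ ∈ V from Or.inr hy₀W] at this
end

section
/- Let X be a finite ordered set in which every element is maximal or minimal and which is connected (as an order-graph), and let Y be a finite ordered set in which every element is maximal or minimal. Let φ : X → Y be an order-preserving map satisfying φ(max(x)) = max(φ(x)) and φ(min(x)) = min(φ(x)) for all x ∈ X. If φ(X) contains some element c and d ∈ Y lies in the same connected component of Y as c, then d ∈ φ(X). In particular, if Y is connected and X is nonempty, then φ is surjective. -/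
/-- Let `X` be a finite connected ordered set in which every element is
maximal or minimal, `Y` a finite ordered set in which every element is
maximal or minimal, and `φ : X → Y` a ddp-space morphism. Then the image of
`φ` is closed under order-connectedness in `Y`; in particular, if `Y` is
connected and `X` is nonempty, then `φ` is surjective. -/
theorem ddp_morphism_image_component
    {X Y : Type*} [PartialOrder X] [Fintype X] [PartialOrder Y] [Fintype Y]
    (hXmm : ∀ x : X, IsMax x ∨ IsMin x)
    (hXconn : ∀ a b : X, Relation.ReflTransGen (fun u v : X => u ≤ v ∨ v ≤ u) a b)
    (hYmm : ∀ y : Y, IsMax y ∨ IsMin y)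
    (φ : X → Y) (hφmono : Monotone φ)
    (hφmax : ∀ x : X, φ '' {y : X | x ≤ y ∧ IsMax y} = {z : Y | φ x ≤ z ∧ IsMax z})
    (hφmin : ∀ x : X, φ '' {y : X | y ≤ x ∧ IsMin y} = {z : Y | z ≤ φ x ∧ IsMin z}) :
    (∀ c d : Y, c ∈ Set.range φ →
      Relation.ReflTransGen (fun u v : Y => u ≤ v ∨ v ≤ u) c d →
      d ∈ Set.range φ) ∧
    ((∀ c d : Y, Relation.ReflTransGen (fun u v : Y => u ≤ v ∨ v ≤ u) c d) →
      Nonempty X → Function.Surjective φ) := by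
  have step : ∀ c d : Y, c ∈ Set.range φ → (c ≤ d ∨ d ≤ c) → d ∈ Set.range φ := by
    rintro c d ⟨x, rfl⟩ hcd
    rcases hcd with h | h
    · rcases hYmm d with hd | hd
      · have : d ∈ {z : Y | φ x ≤ z ∧ IsMax z} := ⟨h, hd⟩
        rw [← hφmax x] at this
        rcases this with ⟨y, _, rfl⟩
        exact ⟨y, rfl⟩
      · have : d = φ x := le_antisymm (hd h) h
        exact ⟨x, this.symm⟩
    · rcases hYmm d with hd | hd
      · have : d = φ x := le_antisymm h (hd h)
        exact ⟨x, this.symm⟩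
      · have : d ∈ {z : Y | z ≤ φ x ∧ IsMin z} := ⟨h, hd⟩
        rw [← hφmin x] at this
        rcases this with ⟨y, _, rfl⟩
        exact ⟨y, rfl⟩
  have main : ∀ c d : Y, c ∈ Set.range φ →
      Relation.ReflTransGen (fun u v : Y => u ≤ v ∨ v ≤ u) c d → d ∈ Set.range φ := by
    intro c d hc h
    induction h with
    | refl => exact hc
    | tail _ hbc ih => exact step _ _ ih hbc
  refine ⟨main, fun hconn ⟨x⟩ d => main (φ x) d ⟨x, rfl⟩ (hconn _ _)⟩
end

section
/- Let X₁ and X₂ be finite connected ordered sets in which each element is maximal or minimal, let Y be a finite ordered set, and let φ₁ : X₁ → Y and φ₂ : X₂ → Y be jointly surjective ddp-space morphisms (order-preserving maps with φᵢ(max(x)) = max(φᵢ(x)) and φᵢ(min(x)) = min(φᵢ(x))). If φ₁(X₁) ∪ φ₂(X₂) = Y and Y is not the disjoint (order-incomparable) union of φ₁(X₁) and φ₂(X₂), then both φ₁ and φ₂ are surjective. -/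
/-- Let `X₁, X₂` be finite connected ordered sets whose elements are all
maximal or minimal, `Y` a finite ordered set, and `φ₁, φ₂` jointly surjective
ddp-space morphisms. If `Y` is not the order-incomparable disjoint union of
the two images, then both `φ₁` and `φ₂` are surjective. -/
theorem ddp_jointly_surjective_both_surjective
    {X₁ X₂ Y : Type*} [PartialOrder X₁] [Fintype X₁] [PartialOrder X₂] [Fintype X₂]
    [PartialOrder Y] [Fintype Y]
    (hX₁mm : ∀ x : X₁, IsMax x ∨ IsMin x)
    (hX₁conn : ∀ a b : X₁, Relation.ReflTransGen (fun u v : X₁ => u ≤ v ∨ v ≤ u) a b)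
    (hX₂mm : ∀ x : X₂, IsMax x ∨ IsMin x)
    (hX₂conn : ∀ a b : X₂, Relation.ReflTransGen (fun u v : X₂ => u ≤ v ∨ v ≤ u) a b)
    (φ₁ : X₁ → Y) (φ₂ : X₂ → Y)
    (hφ₁mono : Monotone φ₁) (hφ₂mono : Monotone φ₂)
    (hφ₁max : ∀ x : X₁, φ₁ '' {y : X₁ | x ≤ y ∧ IsMax y} = {z : Y | φ₁ x ≤ z ∧ IsMax z})
    (hφ₁min : ∀ x : X₁, φ₁ '' {y : X₁ | y ≤ x ∧ IsMin y} = {z : Y | z ≤ φ₁ x ∧ IsMin z})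
    (hφ₂max : ∀ x : X₂, φ₂ '' {y : X₂ | x ≤ y ∧ IsMax y} = {z : Y | φ₂ x ≤ z ∧ IsMax z})
    (hφ₂min : ∀ x : X₂, φ₂ '' {y : X₂ | y ≤ x ∧ IsMin y} = {z : Y | z ≤ φ₂ x ∧ IsMin z})
    (hjoint : ∀ y : Y, (∃ x, φ₁ x = y) ∨ (∃ x, φ₂ x = y))
    (hnotdisjoint : ¬ ((∀ (x₁ : X₁) (x₂ : X₂), φ₁ x₁ ≠ φ₂ x₂) ∧
      (∀ (x₁ : X₁) (x₂ : X₂), ¬ φ₁ x₁ ≤ φ₂ x₂ ∧ ¬ φ₂ x₂ ≤ φ₁ x₁))) :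
    Function.Surjective φ₁ ∧ Function.Surjective φ₂ := by
  -- every element of Y is maximal or minimal
  have hYmm : ∀ y : Y, IsMax y ∨ IsMin y := by
    intro y
    rcases hjoint y with ⟨x, rfl⟩ | ⟨x, rfl⟩
    · rcases hX₁mm x with hx | hx
      · left
        have : φ₁ x ∈ {z : Y | φ₁ x ≤ z ∧ IsMax z} := by
          rw [← hφ₁max x]; exact ⟨x, ⟨le_rfl, hx⟩, rfl⟩
        exact this.2
      · right
        have : φ₁ x ∈ {z : Y | z ≤ φ₁ x ∧ IsMin z} := by
          rw [← hφ₁min x]; exact ⟨x, ⟨le_rfl, hx⟩, rfl⟩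
        exact this.2
    · rcases hX₂mm x with hx | hx
      · left
        have : φ₂ x ∈ {z : Y | φ₂ x ≤ z ∧ IsMax z} := by
          rw [← hφ₂max x]; exact ⟨x, ⟨le_rfl, hx⟩, rfl⟩
        exact this.2
      · right
        have : φ₂ x ∈ {z : Y | z ≤ φ₂ x ∧ IsMin z} := by
          rw [← hφ₂min x]; exact ⟨x, ⟨le_rfl, hx⟩, rfl⟩
        exact this.2
  -- closure of the ranges under comparability
  have key1 : ∀ (x : X₁) (z : Y), (φ₁ x ≤ z ∨ z ≤ φ₁ x) → z ∈ Set.range φ₁ := by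
    intro x z hz
    rcases hz with hz | hz
    · rcases hYmm z with hmz | hmz
      · have : z ∈ {w : Y | φ₁ x ≤ w ∧ IsMax w} := ⟨hz, hmz⟩
        rw [← hφ₁max x] at this
        rcases this with ⟨w, _, hw⟩; exact ⟨w, hw⟩
      · have : z = φ₁ x := le_antisymm (hmz hz) hz
        exact ⟨x, this.symm⟩
    · rcases hYmm z with hmz | hmz
      · have : z = φ₁ x := le_antisymm hz (hmz hz)
        exact ⟨x, this.symm⟩
      · have : z ∈ {w : Y | w ≤ φ₁ x ∧ IsMin w} := ⟨hz, hmz⟩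
        rw [← hφ₁min x] at this
        rcases this with ⟨w, _, hw⟩; exact ⟨w, hw⟩
  have key2 : ∀ (x : X₂) (z : Y), (φ₂ x ≤ z ∨ z ≤ φ₂ x) → z ∈ Set.range φ₂ := by
    intro x z hz
    rcases hz with hz | hz
    · rcases hYmm z with hmz | hmz
      · have : z ∈ {w : Y | φ₂ x ≤ w ∧ IsMax w} := ⟨hz, hmz⟩
        rw [← hφ₂max x] at this
        rcases this with ⟨w, _, hw⟩; exact ⟨w, hw⟩
      · have : z = φ₂ x := le_antisymm (hmz hz) hz
        exact ⟨x, this.symm⟩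
    · rcases hYmm z with hmz | hmz
      · have : z = φ₂ x := le_antisymm hz (hmz hz)
        exact ⟨x, this.symm⟩
      · have : z ∈ {w : Y | w ≤ φ₂ x ∧ IsMin w} := ⟨hz, hmz⟩
        rw [← hφ₂min x] at this
        rcases this with ⟨w, _, hw⟩; exact ⟨w, hw⟩
  -- extract witnesses with comparable/equal images
  have ⟨x₁, x₂, hcomp⟩ : ∃ (x₁ : X₁) (x₂ : X₂),
      φ₁ x₁ = φ₂ x₂ ∨ φ₁ x₁ ≤ φ₂ x₂ ∨ φ₂ x₂ ≤ φ₁ x₁ := by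
    rw [not_and_or] at hnotdisjoint
    rcases hnotdisjoint with h | h
    · push_neg at h
      obtain ⟨a, b, hab⟩ := h
      exact ⟨a, b, Or.inl hab⟩
    · push_neg at h
      obtain ⟨a, b, hab⟩ := h
      rcases Classical.em (φ₁ a ≤ φ₂ b) with h1 | h1
      · exact ⟨a, b, Or.inr (Or.inl h1)⟩
      · exact ⟨a, b, Or.inr (Or.inr (hab h1))⟩
  -- anchor: φ₂ x₂ ∈ range φ₁ and φ₁ x₁ ∈ range φ₂
  have h21 : φ₂ x₂ ∈ Set.range φ₁ := by
    rcases hcomp with h | h | h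
    · exact ⟨x₁, h⟩
    · exact key1 x₁ (φ₂ x₂) (Or.inl h)
    · exact key1 x₁ (φ₂ x₂) (Or.inr h)
  have h12 : φ₁ x₁ ∈ Set.range φ₂ := by
    rcases hcomp with h | h | h
    · exact ⟨x₂, h.symm⟩
    · exact key2 x₂ (φ₁ x₁) (Or.inr h)
    · exact key2 x₂ (φ₁ x₁) (Or.inl h)
  -- propagate along connectivity
  have all2 : ∀ x : X₂, φ₂ x ∈ Set.range φ₁ := by
    intro x
    induction hX₂conn x₂ x with
    | refl => exact h21
    | @tail b c _ step ih =>
      obtain ⟨w, hw⟩ := ih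
      rcases step with hs | hs
      · exact key1 w (φ₂ c) (Or.inl (hw ▸ hφ₂mono hs))
      · exact key1 w (φ₂ c) (Or.inr (hw ▸ hφ₂mono hs))
  have all1 : ∀ x : X₁, φ₁ x ∈ Set.range φ₂ := by
    intro x
    induction hX₁conn x₁ x with
    | refl => exact h12
    | @tail b c _ step ih =>
      obtain ⟨w, hw⟩ := ih
      rcases step with hs | hs
      · exact key2 w (φ₁ c) (Or.inl (hw ▸ hφ₁mono hs))
      · exact key2 w (φ₁ c) (Or.inr (hw ▸ hφ₁mono hs))
  constructor
  · intro y
    rcases hjoint y with ⟨x, rfl⟩ | ⟨x, rfl⟩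
    · exact ⟨x, rfl⟩
    · exact all2 x
  · intro y
    rcases hjoint y with ⟨x, rfl⟩ | ⟨x, rfl⟩
    · exact all1 x
    · exact ⟨x, rfl⟩
end

section
/- Let X be a finite set with a permutation g that is a single cycle of even length m ≥ 2, let ≤ be a partial order on X with respect to which g is order-reversing, and fix a minimal element a of (X, ≤). Then X₁ := { g^n(a) : n even } consists of minimal elements of (X, ≤), X₂ := { g^n(a) : n odd } consists of maximal elements, and X = X₁ ⊔ X₂. -/
/-- Let `g` be an order-reversing single cycle of even length `m ≥ 2` on a
finite ordered set `X` and `a` a minimal element. Then the even iterates of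
`a` are minimal, the odd iterates are maximal, and these two sets partition
`X`. -/
theorem even_cycle_splits_into_min_max
    {X : Type*} [PartialOrder X] [Fintype X]
    (g : X → X) (hg : ∀ x y : X, x ≤ y → g y ≤ g x)
    (a : X) (m : ℕ) (hm2 : 2 ≤ m) (hmeven : Even m)
    (horbit : ∀ x : X, ∃ n : ℕ, g^[n] a = x)
    (hper : g^[m] a = a)
    (hleast : ∀ k : ℕ, 0 < k → k < m → g^[k] a ≠ a)
    (hmin : IsMin a) :
    (∀ n : ℕ, Even n → IsMin (g^[n] a)) ∧
    (∀ n : ℕ, Odd n → IsMax (g^[n] a)) ∧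
    (∀ x : X, (∃ n : ℕ, Even n ∧ g^[n] a = x) ∨ (∃ n : ℕ, Odd n ∧ g^[n] a = x)) ∧
    (∀ x : X, ¬ ((∃ n : ℕ, Even n ∧ g^[n] a = x) ∧ (∃ n : ℕ, Odd n ∧ g^[n] a = x))) := by
  -- parity behaviour of iterates of an antitone map
  have hpar : ∀ k : ℕ, (Even k → ∀ x y : X, x ≤ y → g^[k] x ≤ g^[k] y) ∧
      (Odd k → ∀ x y : X, x ≤ y → g^[k] y ≤ g^[k] x) := by
    intro k
    induction k with
    | zero =>
      exact ⟨fun _ x y h => h, fun h => absurd h (by simp)⟩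
    | succ n ih =>
      constructor
      · intro he x y hxy
        have hn : Odd n := by rw [Nat.odd_iff]; rw [Nat.even_iff] at he; omega
        rw [Function.iterate_succ_apply, Function.iterate_succ_apply]
        exact ih.2 hn _ _ (hg _ _ hxy)
      · intro ho x y hxy
        have hn : Even n := by rw [Nat.even_iff]; rw [Nat.odd_iff] at ho; omega
        rw [Function.iterate_succ_apply, Function.iterate_succ_apply]
        exact ih.1 hn _ _ (hg _ _ hxy)
  -- g^[m] is the identity pointwise
  have hid : ∀ x : X, g^[m] x = x := by
    intro x
    obtain ⟨n, rfl⟩ := horbit x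
    calc g^[m] (g^[n] a) = g^[m + n] a := (Function.iterate_add_apply g m n a).symm
      _ = g^[n + m] a := by rw [Nat.add_comm]
      _ = g^[n] (g^[m] a) := Function.iterate_add_apply g n m a
      _ = g^[n] a := by rw [hper]
  have hm1odd : Odd (m - 1) := Nat.Even.sub_odd (by omega) hmeven odd_one
  -- the inverse direction: g y ≤ g x → x ≤ y
  have hrefl : ∀ x y : X, g y ≤ g x → x ≤ y := by
    intro x y h
    have := (hpar (m - 1)).2 hm1odd _ _ h
    rw [← Function.iterate_succ_apply, ← Function.iterate_succ_apply,
      Nat.succ_eq_add_one, Nat.sub_add_cancel (by omega : 1 ≤ m), hid, hid] at this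
    exact this
  -- surjectivity
  have hsurj : ∀ x : X, ∃ y : X, g y = x := by
    intro x
    refine ⟨g^[m - 1] x, ?_⟩
    have h1 : g (g^[m - 1] x) = g^[m - 1 + 1] x := (Function.iterate_succ_apply' g (m - 1) x).symm
    rw [h1, Nat.sub_add_cancel (by omega : 1 ≤ m), hid]
  have hminmax : ∀ x : X, IsMin x → IsMax (g x) := by
    intro x hx z hz
    obtain ⟨w, rfl⟩ := hsurj z
    have hwx : w ≤ x := hrefl w x hz
    exact hg _ _ (hx hwx)
  have hmaxmin : ∀ x : X, IsMax x → IsMin (g x) := by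
    intro x hx z hz
    obtain ⟨w, rfl⟩ := hsurj z
    have hxw : x ≤ w := hrefl x w hz
    exact hg _ _ (hx hxw)
  -- alternation of min/max along the orbit
  have halt : ∀ n : ℕ, (Even n → IsMin (g^[n] a)) ∧ (Odd n → IsMax (g^[n] a)) := by
    intro n
    induction n with
    | zero => exact ⟨fun _ => hmin, fun h => absurd h (by simp)⟩
    | succ n ih =>
      constructor
      · intro he
        have hn : Odd n := by rw [Nat.odd_iff]; rw [Nat.even_iff] at he; omega
        rw [Function.iterate_succ_apply']
        exact hmaxmin _ (ih.2 hn)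
      · intro ho
        have hn : Even n := by rw [Nat.even_iff]; rw [Nat.odd_iff] at ho; omega
        rw [Function.iterate_succ_apply']
        exact hminmax _ (ih.1 hn)
  -- reduction mod m
  have hmulid : ∀ q r : ℕ, g^[m * q + r] a = g^[r] a := by
    intro q
    induction q with
    | zero => simp
    | succ q ih =>
      intro r
      have : m * (q + 1) + r = m * q + r + m := by ring
      rw [this, Function.iterate_add_apply, hid, ih]
  have hmod : ∀ n : ℕ, g^[n] a = g^[n % m] a := by
    intro n
    conv_lhs => rw [← Nat.div_add_mod n m]
    exact hmulid (n / m) (n % m)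
  have h2m : 2 ∣ m := hmeven.two_dvd
  refine ⟨fun n hn => (halt n).1 hn, fun n hn => (halt n).2 hn, ?_, ?_⟩
  · intro x
    obtain ⟨n, rfl⟩ := horbit x
    rcases Nat.even_or_odd n with h | h
    · exact Or.inl ⟨n, h, rfl⟩
    · exact Or.inr ⟨n, h, rfl⟩
  · rintro x ⟨⟨n, hn, rfl⟩, ⟨k, hk, hkx⟩⟩
    -- reduce both mod m
    set r := n % m with hr
    set s := k % m with hs
    have hrev : Even r := by
      have := Nat.mod_mod_of_dvd n h2m
      rw [Nat.even_iff] at hn ⊢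
      rwa [hr, this]
    have hsod : Odd s := by
      have := Nat.mod_mod_of_dvd k h2m
      rw [Nat.odd_iff] at hk ⊢
      rwa [hs, this]
    have hrlt : r < m := Nat.mod_lt _ (by omega)
    have hslt : s < m := Nat.mod_lt _ (by omega)
    have heq : g^[r] a = g^[s] a := by
      rw [← hmod, ← hmod, hkx]
    have hrs : r ≠ s := by
      intro hrs'
      rw [Nat.even_iff] at hrev
      rw [Nat.odd_iff] at hsod
      omega
    rcases Nat.lt_or_ge r s with h | h
    · -- r < s : apply g^[m - s]
      have : g^[m - s + r] a = a := by
        rw [Function.iterate_add_apply, heq, ← Function.iterate_add_apply,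
          Nat.sub_add_cancel (Nat.le_of_lt hslt), hper]
      exact hleast (m - s + r) (by omega) (by omega) this
    · have hlt : s < r := by omega
      have : g^[m - r + s] a = a := by
        rw [Function.iterate_add_apply, ← heq, ← Function.iterate_add_apply,
          Nat.sub_add_cancel (Nat.le_of_lt hrlt), hper]
      exact hleast (m - r + s) (by omega) (by omega) this
end

section
/- No nontrivial Ockham algebra A with |A| even number of dual-space points forming an even g-cycle is quasi-primal; concretely: let X be a finite Ockham space whose map g is a single cycle of even length on X. Then there exist an Ockham space Y on a three-element chain u < v < w with g^Y(u) = w, g^Y(v) = v, g^Y(w) = u and jointly surjective Ockham-space morphisms φ₁, φ₂ : X → Y (continuous order-preserving maps commuting with g, i.e., φᵢ ∘ g^X = g^Y ∘ φᵢ) such that neither φ₁ nor φ₂ is surjective and the images φ₁(X) and φ₂(X) are not mutually incomparable. -/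
/-!
Index the cycle from a minimal point `b`. Because the cycle has even length, the parity of `n`
in `x = g^[n] b` is well defined, and sending even positions to `u` and odd ones to `w` commutes
with `g`. It is order-preserving because an odd position `x` lies below no even position `y`:
an odd power of `g` maps `x` back to `b` and reverses `x ≤ y`, so it maps `y` below `b`, hence
onto `b`, which forces `y` to an odd position as well. The constant map to `v` covers the
remaining point of the chain.
-/

namespace Function

variable {α : Type*} {f : α → α} {x y : α}

theorem iterate_mem_periodicPts (hx : x ∈ periodicPts f) (n : ℕ) : f^[n] x ∈ periodicPts f :=
  mk_mem_periodicPts (minimalPeriod_pos_of_mem_periodicPts hx)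
    ((isPeriodicPt_minimalPeriod f x).apply_iterate n)

theorem exists_iterate_eq_symm (hx : x ∈ periodicPts f) (h : ∃ n, f^[n] x = y) :
    ∃ n, f^[n] y = x := by
  obtain ⟨n, rfl⟩ := h
  rw [← mem_periodicOrbit_iff (iterate_mem_periodicPts hx n), periodicOrbit_apply_iterate_eq hx]
  exact self_mem_periodicOrbit hx

theorem iterate_eq_iterate_iff_modEq (hx : x ∈ periodicPts f) {i j : ℕ} :
    f^[i] x = f^[j] x ↔ i ≡ j [MOD minimalPeriod f x] := by
  have hpos := minimalPeriod_pos_of_mem_periodicPts hx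
  rw [← iterate_mod_minimalPeriod_eq, ← iterate_mod_minimalPeriod_eq (n := j),
    iterate_eq_iterate_iff_of_lt_minimalPeriod (Nat.mod_lt _ hpos) (Nat.mod_lt _ hpos)]
  rfl

theorem even_iff_even_of_iterate_eq (hx : x ∈ periodicPts f) (hev : Even (minimalPeriod f x))
    {i j : ℕ} (h : f^[i] x = f^[j] x) : Even i ↔ Even j := by
  have hmod : i ≡ j [MOD 2] :=
    ((iterate_eq_iterate_iff_modEq hx).1 h).of_dvd (even_iff_two_dvd.1 hev)
  simp only [Nat.even_iff, show i % 2 = j % 2 from hmod]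

def evenIterates (f : α → α) (x : α) : Set α :=
  {y | ∃ n, Even n ∧ f^[n] x = y}

theorem iterate_mem_evenIterates_iff (hx : x ∈ periodicPts f) (hev : Even (minimalPeriod f x))
    {k : ℕ} : f^[k] x ∈ evenIterates f x ↔ Even k :=
  ⟨fun ⟨_, hn, h⟩ => (even_iff_even_of_iterate_eq hx hev h).1 hn,
    fun hk => ⟨k, hk, rfl⟩⟩

/-- The map `φ₁`, with the chain `u < v < w` encoded as `0 < 1 < 2` in `Fin 3`. -/
noncomputable def orbitParityMap (f : α → α) (x : α) (y : α) : Fin 3 :=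
  open Classical in if y ∈ evenIterates f x then 0 else 2

theorem orbitParityMap_ne_one : orbitParityMap f x y ≠ 1 := by
  unfold orbitParityMap
  split_ifs <;> decide

theorem orbitParityMap_self : orbitParityMap f x x = 0 :=
  if_pos ⟨0, _root_.Even.zero, rfl⟩

theorem orbitParityMap_apply_iterate (hx : x ∈ periodicPts f) (hev : Even (minimalPeriod f x))
    (k : ℕ) : orbitParityMap f x (f^[k] x) = if Even k then 0 else 2 := by
  simp only [orbitParityMap, iterate_mem_evenIterates_iff hx hev]

theorem semiconj_orbitParityMap (hx : x ∈ periodicPts f) (hev : Even (minimalPeriod f x))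
    (hcover : ∀ y, ∃ n, f^[n] x = y) : Semiconj (orbitParityMap f x) f ![2, 1, 0] := by
  intro y
  obtain ⟨k, rfl⟩ := hcover y
  rw [← iterate_succ_apply' f k, orbitParityMap_apply_iterate hx hev,
    orbitParityMap_apply_iterate hx hev]
  by_cases hk : Even k <;> simp [hk, Nat.even_add_one]

end Function

open Function

theorem Antitone.iterate_of_odd {α : Type*} [Preorder α] {f : α → α} (hf : Antitone f)
    {n : ℕ} (hn : Odd n) : Antitone f^[n] := by
  obtain ⟨k, rfl⟩ := hn
  rw [iterate_add, iterate_mul, iterate_one]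
  exact ((hf.comp hf).iterate k).comp_antitone hf

section Order

variable {α : Type*} [PartialOrder α] {f : α → α} {b : α}

theorem not_iterate_odd_le_iterate_even (hf : Antitone f) (hb : IsMin b)
    (hper : b ∈ periodicPts f) (hev : Even (minimalPeriod f b)) {k l : ℕ} (hk : Odd k)
    (hl : Even l) : ¬ f^[k] b ≤ f^[l] b := by
  intro hle
  set m := minimalPeriod f b
  have hm : 0 < m := minimalPeriod_pos_of_mem_periodicPts hper
  -- `N` is odd and `N + k` is a multiple of the period, so `f^[N]` sends `f^[k] b` back to `b`.
  set N := k * (m - 1)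
  have hN : Odd N := hk.mul (Nat.Even.sub_odd hm hev odd_one)
  have hback : f^[N] (f^[k] b) = b := by
    rw [← iterate_add_apply, show N + k = k * m by
      simp only [N, Nat.mul_sub_one, Nat.sub_add_cancel (Nat.le_mul_of_pos_right k hm)]]
    exact (isPeriodicPt_minimalPeriod f b).const_mul k
  have hreturn : f^[N + l] b = f^[0] b := by
    rw [iterate_add_apply, iterate_zero_apply]
    exact hb.eq_of_le ((hf.iterate_of_odd hN hle).trans_eq hback)
  have heven : Even (N + l) := (even_iff_even_of_iterate_eq hper hev hreturn).2 Even.zero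
  exact Nat.not_even_iff_odd.2 (hN.add_even hl) heven

theorem monotone_orbitParityMap (hf : Antitone f) (hb : IsMin b) (hper : b ∈ periodicPts f)
    (hev : Even (minimalPeriod f b)) (hcover : ∀ y, ∃ n, f^[n] b = y) :
    Monotone (orbitParityMap f b) := by
  intro y z hyz
  obtain ⟨k, rfl⟩ := hcover y
  obtain ⟨l, rfl⟩ := hcover z
  rw [orbitParityMap_apply_iterate hper hev, orbitParityMap_apply_iterate hper hev]
  split_ifs with hk hl hl
  · exact le_rfl
  · decide
  · exact absurd hyz (not_iterate_odd_le_iterate_even hf hb hper hev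
      (Nat.not_even_iff_odd.1 hk) hl)
  · exact le_rfl

end Order

/-- Let `X` be a finite Ockham space whose order-reversing map `gX` is a
single cycle of even length `m ≥ 2`. Then there is an Ockham-space structure
`gY` on the three-element chain `Fin 3` (with `gY 0 = 2`, `gY 1 = 1`,
`gY 2 = 0`) and jointly surjective Ockham-space morphisms
`φ₁, φ₂ : X → Fin 3`, neither of which is surjective, whose images are not
mutually incomparable. -/
theorem even_cycle_ockham_not_quasiprimal
    {X : Type*} [PartialOrder X] [Fintype X]
    (gX : X → X) (hg : ∀ x y : X, x ≤ y → gX y ≤ gX x)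
    (a : X) (m : ℕ) (hm2 : 2 ≤ m) (hmeven : Even m)
    (horbit : ∀ x : X, ∃ n : ℕ, gX^[n] a = x)
    (hper : gX^[m] a = a)
    (hleast : ∀ k : ℕ, 0 < k → k < m → gX^[k] a ≠ a) :
    ∃ (gY : Fin 3 → Fin 3) (φ₁ φ₂ : X → Fin 3),
      gY 0 = 2 ∧ gY 1 = 1 ∧ gY 2 = 0 ∧
      (∀ u v : Fin 3, u ≤ v → gY v ≤ gY u) ∧
      Monotone φ₁ ∧ Monotone φ₂ ∧
      (∀ x : X, φ₁ (gX x) = gY (φ₁ x)) ∧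
      (∀ x : X, φ₂ (gX x) = gY (φ₂ x)) ∧
      (∀ y : Fin 3, (∃ x, φ₁ x = y) ∨ (∃ x, φ₂ x = y)) ∧
      ¬ Function.Surjective φ₁ ∧ ¬ Function.Surjective φ₂ ∧
      (∃ (x₁ x₂ : X), φ₁ x₁ ≤ φ₂ x₂ ∨ φ₂ x₂ ≤ φ₁ x₁) := by
  have ha : a ∈ periodicPts gX := mk_mem_periodicPts (by omega) hper
  have hmin : minimalPeriod gX a = m :=
    le_antisymm (IsPeriodicPt.minimalPeriod_le (by omega) hper) (not_lt.1 fun hlt =>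
      hleast _ (minimalPeriod_pos_of_mem_periodicPts ha) hlt iterate_minimalPeriod)
  obtain ⟨b, -, hb⟩ := Finite.exists_le_minimal (p := fun _ : X => True) (a := a) trivial
  obtain ⟨n, hn⟩ := horbit b
  have hbper : b ∈ periodicPts gX := hn ▸ iterate_mem_periodicPts ha n
  have hev : Even (minimalPeriod gX b) := by
    rwa [← hn, minimalPeriod_apply_iterate ha, hmin]
  have hcover (x : X) : ∃ k, gX^[k] b = x := by
    obtain ⟨j, hj⟩ := exists_iterate_eq_symm ha ⟨n, hn⟩
    obtain ⟨i, rfl⟩ := horbit x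
    exact ⟨i + j, by rw [iterate_add_apply, hj]⟩
  have hsemi := semiconj_orbitParityMap hbper hev hcover
  have hφb : orbitParityMap gX b b = 0 := orbitParityMap_self
  have hφgb : orbitParityMap gX b (gX b) = 2 := by rw [hsemi b, hφb]; rfl
  refine ⟨![2, 1, 0], orbitParityMap gX b, fun _ => 1, rfl, rfl, rfl, by decide,
    monotone_orbitParityMap hg (minimal_true.1 hb) hbper hev hcover, monotone_const, hsemi,
    fun _ => rfl, fun y => ?_, fun h => orbitParityMap_ne_one (h 1).choose_spec,
    fun h => absurd (h 0).choose_spec one_ne_zero,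
    ⟨b, b, Or.inl (hφb.trans_le (Fin.zero_le _))⟩⟩
  fin_cases y
  · exact Or.inl ⟨b, hφb⟩
  · exact Or.inr ⟨b, rfl⟩
  · exact Or.inl ⟨gX b, hφgb⟩
end

section
/- Let Y be an ordered set with an order-reversing self-map t^Y, let X₁, X₂ be sets with self-maps t^{X₁}, t^{X₂}, and let φᵢ : Xᵢ → Y satisfy φᵢ ∘ t^{Xᵢ} = t^Y ∘ φᵢ. Suppose a ∈ X₁ and b ∈ X₂ with φ₁(a) ≤ φ₂(b), and suppose there exists m ≥ 0 such that c := (t^{X₁})^m(a) and d := (t^{X₂})^m(b) lie on odd cycles of t^{X₁} and t^{X₂} respectively. Then φ₁(c) = φ₂(d). -/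
private lemma equiv_iter {X Y : Type*} (tY : Y → Y) (t : X → X) (φ : X → Y)
    (heq : ∀ x : X, φ (t x) = tY (φ x)) (n : ℕ) (x : X) :
    φ (t^[n] x) = tY^[n] (φ x) := by
  induction n with
  | zero => simp
  | succ k ih => rw [Function.iterate_succ_apply', Function.iterate_succ_apply', heq, ih]

private lemma iter_parity {Y : Type*} [PartialOrder Y] (tY : Y → Y)
    (htY : ∀ u v : Y, u ≤ v → tY v ≤ tY u) (n : ℕ) {u v : Y} (h : u ≤ v) :
    (Even n → tY^[n] u ≤ tY^[n] v) ∧ (Odd n → tY^[n] v ≤ tY^[n] u) := by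
  induction n with
  | zero =>
    refine ⟨fun _ => by simpa using h, fun h' => absurd h' (by simp)⟩
  | succ k ih =>
    constructor
    · intro he
      have hk : Odd k := by
        rcases Nat.even_or_odd k with h' | h'
        · exact absurd he (by simp [Nat.even_add_one, h'])
        · exact h'
      rw [Function.iterate_succ_apply', Function.iterate_succ_apply']
      exact htY _ _ (ih.2 hk)
    · intro ho
      have hk : Even k := by
        rcases Nat.even_or_odd k with h' | h'
        · exact h'
        · exact absurd ho (by simp [Nat.odd_add_one, Nat.not_even_iff_odd, h'])
      rw [Function.iterate_succ_apply', Function.iterate_succ_apply']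
      exact htY _ _ (ih.1 hk)

/-- Let `t^Y` be an order-reversing self-map of a poset `Y`, `φᵢ : Xᵢ → Y`
equivariant maps, `φ₁ a ≤ φ₂ b`, and suppose the `m`-th iterates
`c = (t^{X₁})^m a` and `d = (t^{X₂})^m b` lie on odd cycles of `t^{X₁}` and
`t^{X₂}` respectively. Then `φ₁ c = φ₂ d`. -/
theorem equivariant_images_on_odd_cycles_equal
    {X₁ X₂ Y : Type*} [PartialOrder Y]
    (tY : Y → Y) (htY : ∀ u v : Y, u ≤ v → tY v ≤ tY u)
    (t₁ : X₁ → X₁) (t₂ : X₂ → X₂)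
    (φ₁ : X₁ → Y) (φ₂ : X₂ → Y)
    (heq₁ : ∀ x : X₁, φ₁ (t₁ x) = tY (φ₁ x))
    (heq₂ : ∀ x : X₂, φ₂ (t₂ x) = tY (φ₂ x))
    (a : X₁) (b : X₂) (hab : φ₁ a ≤ φ₂ b)
    (m : ℕ)
    (hc : Odd (Function.minimalPeriod t₁ (t₁^[m] a)))
    (hd : Odd (Function.minimalPeriod t₂ (t₂^[m] b))) :
    φ₁ (t₁^[m] a) = φ₂ (t₂^[m] b) := by
  set c := t₁^[m] a with hc'
  set d := t₂^[m] b with hd'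
  set p := Function.minimalPeriod t₁ c
  set q := Function.minimalPeriod t₂ d
  have hN : Odd (p * q) := hc.mul hd
  -- c and d are fixed by p*q iterations
  have hfc : t₁^[p * q] c = c := by
    have := (Function.isPeriodicPt_minimalPeriod t₁ c).mul_const q
    exact this
  have hfd : t₂^[p * q] d = d := by
    have := (Function.isPeriodicPt_minimalPeriod t₂ d).const_mul p
    exact this
  -- images are fixed by tY^[p*q]
  have hgc : tY^[p * q] (φ₁ c) = φ₁ c := by
    rw [← equiv_iter tY t₁ φ₁ heq₁, hfc]
  have hgd : tY^[p * q] (φ₂ d) = φ₂ d := by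
    rw [← equiv_iter tY t₂ φ₂ heq₂, hfd]
  -- comparability of φ₁ c and φ₂ d
  have h1 : φ₁ c = tY^[m] (φ₁ a) := equiv_iter tY t₁ φ₁ heq₁ m a
  have h2 : φ₂ d = tY^[m] (φ₂ b) := equiv_iter tY t₂ φ₂ heq₂ m b
  rcases Nat.even_or_odd m with hm | hm
  · have hle : φ₁ c ≤ φ₂ d := by
      rw [h1, h2]; exact (iter_parity tY htY m hab).1 hm
    have := (iter_parity tY htY (p * q) hle).2 hN
    rw [hgc, hgd] at this
    exact le_antisymm hle this
  · have hle : φ₂ d ≤ φ₁ c := by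
      rw [h1, h2]; exact (iter_parity tY htY m hab).2 hm
    have := (iter_parity tY htY (p * q) hle).2 hN
    rw [hgc, hgd] at this
    exact le_antisymm this hle
end
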